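/- arXiv:1311.6394 — 8 statements merged into one kernel-verified Lean document; each statement's English description precedes it below -/
import Mathlib

section
/- There is no smooth function F : ℝ³ → ℝ with F ≥ 0 everywhere satisfying F(x₁,x₂,0) = (x₁-x₂)², F(0,x₂,x₃) = (x₂-x₃)², and F(x₁,0,x₃) = (x₁-x₃)² for all real x₁,x₂,x₃. -/
open Filter Set Topology

lemma aux1 {h : ℝ → ℝ} (hc : ContDiff ℝ (⊤:ℕ∞) h) (h0 : h 0 = 0) (hpos : ∀ t, 0 ≤ h t) :
    0 ≤ deriv (deriv h) 0 := by
  by_contra hneg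
  push_neg at hneg
  have hmin : IsLocalMin h 0 := Filter.Eventually.of_forall fun x => h0.trans_le (hpos x)
  have hp0 : deriv h 0 = 0 := hmin.deriv_eq_zero
  have hder : ContDiff ℝ (⊤:ℕ∞) (deriv h) := (contDiff_infty_iff_deriv.mp hc).2
  have hd : HasDerivAt (deriv h) (deriv (deriv h) 0) 0 :=
    (hder.differentiable (by simp) 0).hasDerivAt
  have hslope := hasDerivAt_iff_tendsto_slope.mp hd
  have hev : ∀ᶠ t in 𝓝[≠] (0:ℝ), slope (deriv h) 0 t < 0 :=
    hslope.eventually_lt_const hneg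
  have hev' : ∀ᶠ t in 𝓝[>] (0:ℝ), slope (deriv h) 0 t < 0 :=
    hev.filter_mono (nhdsWithin_mono 0 (fun x hx => ne_of_gt hx))
  obtain ⟨δ, hδ, hsub⟩ := mem_nhdsGT_iff_exists_Ioo_subset.mp hev'
  have hδ0 : (0:ℝ) < δ := hδ
  have hpneg : ∀ t ∈ Ioo (0:ℝ) δ, deriv h t < 0 := by
    intro t ht
    have h2 : slope (deriv h) 0 t < 0 := hsub ht
    rw [slope_def_field] at h2
    rw [hp0, sub_zero, sub_zero] at h2
    have := mul_neg_of_neg_of_pos h2 ht.1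
    rwa [div_mul_cancel₀ _ (ne_of_gt ht.1)] at this
  have hsa : StrictAntiOn h (Icc 0 (δ/2)) := by
    refine strictAntiOn_of_deriv_neg (convex_Icc 0 (δ/2)) (hc.continuous.continuousOn) ?_
    intro x hx
    rw [interior_Icc] at hx
    exact hpneg x ⟨hx.1, by linarith [hx.2]⟩
  have hlt : h (δ/2) < h 0 :=
    hsa (left_mem_Icc.mpr (by linarith)) (right_mem_Icc.mpr (by linarith)) (by linarith)
  have := hpos (δ/2)
  rw [h0] at hlt
  linarith

lemma aux2 {F : ℝ × ℝ × ℝ → ℝ} (hF : ContDiff ℝ (⊤:ℕ∞) F) (v : ℝ × ℝ × ℝ) :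
    deriv (deriv (fun t : ℝ => F (t • v))) 0 = fderiv ℝ (fderiv ℝ F) 0 v v := by
  have hlin : ∀ t : ℝ, HasDerivAt (fun s : ℝ => s • v) v t := by
    intro t
    simpa using (hasDerivAt_id t).smul_const v
  have hd1 : deriv (fun s : ℝ => F (s • v)) = fun t => fderiv ℝ F (t • v) v := by
    funext t
    exact ((hF.differentiable (by simp) (t • v)).hasFDerivAt.comp_hasDerivAt t (hlin t)).deriv
  rw [hd1]
  have hF' : ContDiff ℝ (⊤:ℕ∞) (fderiv ℝ F) := hF.fderiv_right (by exact_mod_cast le_top)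
  have hc : HasDerivAt (fun t : ℝ => fderiv ℝ F (t • v)) (fderiv ℝ (fderiv ℝ F) 0 v) 0 := by
    have := ((hF'.differentiable (by simp) ((0:ℝ) • v)).hasFDerivAt).comp_hasDerivAt 0 (hlin 0)
    simp only [zero_smul] at this
    exact this
  have h2 : HasDerivAt (fun t : ℝ => fderiv ℝ F (t • v) v)
      (fderiv ℝ (fderiv ℝ F) 0 v v) 0 := by
    have := hc.clm_apply (hasDerivAt_const (0:ℝ) v)
    simpa using this
  exact h2.deriv

theorem stmt_1 :
    ¬ ∃ F : ℝ × ℝ × ℝ → ℝ, ContDiff ℝ (⊤ : ℕ∞) F ∧ (∀ x, 0 ≤ F x) ∧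
      (∀ x₁ x₂ : ℝ, F (x₁, x₂, 0) = (x₁ - x₂) ^ 2) ∧
      (∀ x₂ x₃ : ℝ, F (0, x₂, x₃) = (x₂ - x₃) ^ 2) ∧
      (∀ x₁ x₃ : ℝ, F (x₁, 0, x₃) = (x₁ - x₃) ^ 2) := by
  rintro ⟨F, hF, hpos, h12, h23, h13⟩
  set B := fderiv ℝ (fderiv ℝ F) 0 with hB
  have key : ∀ (v : ℝ × ℝ × ℝ) (c : ℝ), (∀ t : ℝ, F (t • v) = c * t ^ 2) →
      B v v = 2 * c := by
    intro v c hg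
    rw [hB, ← aux2 (hF.of_le (by simp)) v]
    have he : (fun t : ℝ => F (t • v)) = fun t => c * t ^ 2 := funext hg
    rw [he]
    have d1 : deriv (fun t : ℝ => c * t ^ 2) = fun t => c * (2 * t) := by
      funext t
      rw [deriv_const_mul _ (differentiableAt_pow 2)]
      simp [deriv_pow]
    rw [d1]
    have d2 : HasDerivAt (fun t : ℝ => c * (2 * t)) (2 * c) 0 := by
      simpa [mul_comm] using ((hasDerivAt_id (0:ℝ)).const_mul 2).const_mul c
    exact d2.deriv
  have e1 : B (1,0,0) (1,0,0) = 2 := by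
    have := key (1,0,0) 1 (fun t => by
      simp only [Prod.smul_mk, smul_eq_mul, mul_one, mul_zero]
      rw [h13 t 0]; ring)
    linarith
  have e2 : B (0,1,0) (0,1,0) = 2 := by
    have := key (0,1,0) 1 (fun t => by
      simp only [Prod.smul_mk, smul_eq_mul, mul_one, mul_zero]
      rw [h23 t 0]; ring)
    linarith
  have e3 : B (0,0,1) (0,0,1) = 2 := by
    have := key (0,0,1) 1 (fun t => by
      simp only [Prod.smul_mk, smul_eq_mul, mul_one, mul_zero]
      rw [h23 0 t]; ring)
    linarith
  have z12 : B (1,1,0) (1,1,0) = 0 := by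
    have := key (1,1,0) 0 (fun t => by
      simp only [Prod.smul_mk, smul_eq_mul, mul_one, mul_zero]
      rw [h12 t t]; ring)
    linarith
  have z23 : B (0,1,1) (0,1,1) = 0 := by
    have := key (0,1,1) 0 (fun t => by
      simp only [Prod.smul_mk, smul_eq_mul, mul_one, mul_zero]
      rw [h23 t t]; ring)
    linarith
  have z13 : B (1,0,1) (1,0,1) = 0 := by
    have := key (1,0,1) 0 (fun t => by
      simp only [Prod.smul_mk, smul_eq_mul, mul_one, mul_zero]
      rw [h13 t t]; ring)
    linarith
  have hsum : ∀ u w : ℝ × ℝ × ℝ, B (u + w) (u + w) = B u u + B u w + B w u + B w w := by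
    intro u w
    simp [map_add, ContinuousLinearMap.add_apply]
    ring
  have q12 : B (1,0,0) (0,1,0) + B (0,1,0) (1,0,0) = -4 := by
    have h := hsum (1,0,0) (0,1,0)
    have : ((1:ℝ),(0:ℝ),(0:ℝ)) + (0,1,0) = (1,1,0) := by simp [Prod.ext_iff]
    rw [this] at h
    linarith [z12, e1, e2]
  have q23 : B (0,1,0) (0,0,1) + B (0,0,1) (0,1,0) = -4 := by
    have h := hsum (0,1,0) (0,0,1)
    have : ((0:ℝ),(1:ℝ),(0:ℝ)) + (0,0,1) = (0,1,1) := by simp [Prod.ext_iff]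
    rw [this] at h
    linarith [z23, e2, e3]
  have q13 : B (1,0,0) (0,0,1) + B (0,0,1) (1,0,0) = -4 := by
    have h := hsum (1,0,0) (0,0,1)
    have : ((1:ℝ),(0:ℝ),(0:ℝ)) + (0,0,1) = (1,0,1) := by simp [Prod.ext_iff]
    rw [this] at h
    linarith [z13, e1, e3]
  have hw : B (1,1,1) (1,1,1) = -6 := by
    have hsplit : ((1:ℝ),(1:ℝ),(1:ℝ)) = ((1:ℝ),(0:ℝ),(0:ℝ)) + ((0,1,0) + (0,0,1)) := by
      simp [Prod.ext_iff]
    rw [hsplit]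
    simp only [map_add, ContinuousLinearMap.add_apply]
    linarith [e1, e2, e3, q12, q23, q13]
  -- the diagonal function
  have hg : ContDiff ℝ (⊤ : ℕ∞) (fun t : ℝ => F (t • ((1:ℝ),(1:ℝ),(1:ℝ)))) :=
    hF.comp (contDiff_id.smul contDiff_const)
  have hg0 : F ((0:ℝ) • ((1:ℝ),(1:ℝ),(1:ℝ))) = 0 := by
    simp only [zero_smul]
    have := h12 0 0
    norm_num at this
    exact this
  have hnn := aux1 (hg.of_le (by simp)) (by simpa using hg0) (fun t => hpos _)
  rw [aux2 (hF.of_le (by simp)) ((1:ℝ),(1:ℝ),(1:ℝ))] at hnn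
  rw [← hB] at hnn
  rw [hw] at hnn
  linarith
end

section
/- Let F : ℝ³ → ℝ be a C² function satisfying F(x₁,x₂,0) = (x₁-x₂)², F(0,x₂,x₃) = (x₂-x₃)², and F(x₁,0,x₃) = (x₁-x₃)². Then the function h(t) = F(t,t,t) satisfies h(0) = 0, h'(0) = 0, and h''(0) = -6. -/
/-!
Restrict `F` to lines `s ↦ F (s • w)` through the origin: their first and second derivatives at
`0` are `DF(0) w` and `D²F(0) w w`. On the three coordinate axes `F` is `s²`, and on the three
lines spanned by two coordinate vectors it vanishes. Since `q(w) = D²F(0) w w` satisfies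
`q(a+b+c) = q(a+b) + q(b+c) + q(a+c) - q(a) - q(b) - q(c)`, the diagonal gives
`h''(0) = 0 - 3 · 2 = -6`, while `h'(0) = DF(0)(a+b+c)` is the sum of the vanishing axis derivatives.
-/

section LineRestriction

variable {𝕜 E G : Type*} [NontriviallyNormedField 𝕜] [NormedAddCommGroup E] [NormedSpace 𝕜 E]
  [NormedAddCommGroup G] [NormedSpace 𝕜 G] {f : E → G} {w : E}

theorem hasDerivAt_comp_smul {t : 𝕜} (hf : DifferentiableAt 𝕜 f (t • w)) :
    HasDerivAt (fun s : 𝕜 => f (s • w)) (fderiv 𝕜 f (t • w) w) t := by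
  simpa [Function.comp_def] using hf.hasFDerivAt.comp_hasDerivAt t ((hasDerivAt_id t).smul_const w)

theorem deriv_deriv_comp_smul_zero (hf : ContDiff 𝕜 2 f) :
    deriv (deriv fun s : 𝕜 => f (s • w)) 0 = fderiv 𝕜 (fderiv 𝕜 f) 0 w w := by
  have hdf : Differentiable 𝕜 (fderiv 𝕜 f) :=
    (hf.fderiv_right (m := 1) (by norm_num)).differentiable (by norm_num)
  have hderiv : deriv (fun s : 𝕜 => f (s • w)) = fun t => fderiv 𝕜 f (t • w) w :=
    funext fun t => (hasDerivAt_comp_smul (hf.differentiable (by norm_num) _)).deriv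
  rw [hderiv]
  have := (hasDerivAt_comp_smul (w := w) (t := 0) (hdf _)).clm_apply (hasDerivAt_const 0 w)
  simpa using this.deriv

theorem deriv_pow_two_smul (c : G) : deriv (fun s : 𝕜 => s ^ 2 • c) = fun s => (2 * s) • c :=
  funext fun s => by simpa using ((hasDerivAt_pow 2 s).smul_const c).deriv

theorem fderiv_apply_eq_zero_and_fderiv_fderiv_apply_of_comp_smul_eq (hf : ContDiff 𝕜 2 f)
    {c : G} (hline : ∀ s : 𝕜, f (s • w) = s ^ 2 • c) :
    fderiv 𝕜 f 0 w = 0 ∧ fderiv 𝕜 (fderiv 𝕜 f) 0 w w = (2 : 𝕜) • c := by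
  have hfun : (fun s : 𝕜 => f (s • w)) = fun s => s ^ 2 • c := funext hline
  constructor
  · have := (hasDerivAt_comp_smul (w := w) (t := 0) (hf.differentiable (by norm_num) _)).deriv
    rw [zero_smul, hfun, deriv_pow_two_smul] at this
    simpa using this.symm
  · rw [← deriv_deriv_comp_smul_zero hf, hfun, deriv_pow_two_smul]
    simpa using ((hasDerivAt_id (0 : 𝕜)).const_mul 2 |>.smul_const c).deriv

theorem ContinuousLinearMap.apply_diag_add_add (B : E →L[𝕜] E →L[𝕜] G) (a b c : E) :
    B (a + b + c) (a + b + c) =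
      B (a + b) (a + b) + B (b + c) (b + c) + B (a + c) (a + c) - B a a - B b b - B c c := by
  simp only [map_add, add_apply]
  abel

end LineRestriction

theorem stmt_2 (F : ℝ × ℝ × ℝ → ℝ) (hF : ContDiff ℝ 2 F)
    (h1 : ∀ x₁ x₂ : ℝ, F (x₁, x₂, 0) = (x₁ - x₂) ^ 2)
    (h2 : ∀ x₂ x₃ : ℝ, F (0, x₂, x₃) = (x₂ - x₃) ^ 2)
    (h3 : ∀ x₁ x₃ : ℝ, F (x₁, 0, x₃) = (x₁ - x₃) ^ 2) :
    (fun t : ℝ => F (t, t, t)) 0 = 0 ∧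
    deriv (fun t : ℝ => F (t, t, t)) 0 = 0 ∧
    deriv (deriv (fun t : ℝ => F (t, t, t))) 0 = -6 := by
  set a : ℝ × ℝ × ℝ := (1, 0, 0)
  set b : ℝ × ℝ × ℝ := (0, 1, 0)
  set c : ℝ × ℝ × ℝ := (0, 0, 1)
  have hdiag : (fun t : ℝ => F (t, t, t)) = fun t => F (t • (a + b + c)) := by
    funext t; simp [a, b, c]
  obtain ⟨ha, ha'⟩ := fderiv_apply_eq_zero_and_fderiv_fderiv_apply_of_comp_smul_eq hF
    (w := a) (c := 1) fun s => by simp [a, h1]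
  obtain ⟨hb, hb'⟩ := fderiv_apply_eq_zero_and_fderiv_fderiv_apply_of_comp_smul_eq hF
    (w := b) (c := 1) fun s => by simp [b, h1]
  obtain ⟨hc, hc'⟩ := fderiv_apply_eq_zero_and_fderiv_fderiv_apply_of_comp_smul_eq hF
    (w := c) (c := 1) fun s => by simp [c, h2]
  have hab := (fderiv_apply_eq_zero_and_fderiv_fderiv_apply_of_comp_smul_eq hF
    (w := a + b) (c := 0) fun s => by simp [a, b, h1]).2
  have hbc := (fderiv_apply_eq_zero_and_fderiv_fderiv_apply_of_comp_smul_eq hF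
    (w := b + c) (c := 0) fun s => by simp [b, c, h2]).2
  have hac := (fderiv_apply_eq_zero_and_fderiv_fderiv_apply_of_comp_smul_eq hF
    (w := a + c) (c := 0) fun s => by simp [a, c, h3]).2
  refine ⟨by simpa using h1 0 0, ?_, ?_⟩
  · rw [hdiag, (hasDerivAt_comp_smul (hF.differentiable (by norm_num) _)).deriv, zero_smul,
      map_add, map_add, ha, hb, hc, add_zero, add_zero]
  · rw [hdiag, deriv_deriv_comp_smul_zero hF, ContinuousLinearMap.apply_diag_add_add,
      ha', hb', hc', hab, hbc, hac]
    norm_num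
end

section
/- For n ≥ 2, there is no smooth retraction r : ℝⁿ → Λⁿ_sub of the inclusion, where Λⁿ_sub = {x ∈ ℝⁿ : xᵢ = 0 for some i} with the subspace structure; more precisely, there is no smooth map f : ℝⁿ → ℝⁿ whose image lies in Λⁿ_sub and which restricts to the identity on Λⁿ_sub. -/
theorem stmt_4 (n : ℕ) (hn : 2 ≤ n) :
    ¬ ∃ f : (Fin n → ℝ) → (Fin n → ℝ), ContDiff ℝ (⊤ : ℕ∞) f ∧
      (∀ x : Fin n → ℝ, ∃ i, f x i = 0) ∧
      (∀ x : Fin n → ℝ, (∃ i, x i = 0) → f x = x) := by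
  rintro ⟨f, hf, himg, hfix⟩
  haveI : Nontrivial (Fin n) := Fin.nontrivial_iff_two_le.mpr hn
  have hpos : 0 < n := by omega
  have hf0 : f 0 = 0 := hfix 0 ⟨⟨0, hpos⟩, rfl⟩
  have hder : HasFDerivAt f (fderiv ℝ f 0) 0 :=
    ((hf.differentiable (by simp)) 0).hasFDerivAt
  have key : ∀ j : Fin n, fderiv ℝ f 0 (Pi.single j 1) = Pi.single j 1 := by
    intro j
    obtain ⟨i, hij⟩ := exists_ne j
    set v : Fin n → ℝ := Pi.single j 1 with hv
    have hc : ∀ t : ℝ, f (t • v) = t • v := by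
      intro t
      exact hfix _ ⟨i, by simp [hv, Pi.single_eq_of_ne hij]⟩
    have hcd : HasDerivAt (fun t : ℝ => t • v) v 0 := by
      simpa using (hasDerivAt_id (0 : ℝ)).smul_const v
    have h1 : HasDerivAt (fun t : ℝ => f (t • v)) (fderiv ℝ f 0 v) 0 := by
      have h0 : HasFDerivAt f (fderiv ℝ f 0) ((fun t : ℝ => t • v) 0) := by
        simpa using hder
      exact h0.comp_hasDerivAt 0 hcd
    have h2 : HasDerivAt (fun t : ℝ => f (t • v)) v 0 := by
      simpa only [hc] using hcd
    exact h1.unique h2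
  have hid : fderiv ℝ f 0 = ContinuousLinearMap.id ℝ (Fin n → ℝ) := by
    apply ContinuousLinearMap.coe_injective
    refine (Pi.basisFun ℝ (Fin n)).ext fun j => ?_
    simpa using key j
  have hs : HasStrictFDerivAt f
      ((ContinuousLinearEquiv.refl ℝ (Fin n → ℝ) : (Fin n → ℝ) ≃L[ℝ] (Fin n → ℝ)) :
        (Fin n → ℝ) →L[ℝ] (Fin n → ℝ)) 0 := by
    have h := (hf.contDiffAt (x := (0 : Fin n → ℝ))).hasStrictFDerivAt (by simp)
    rw [hid] at h
    simpa using h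
  have hmap : Filter.map f (nhds 0) = nhds (0 : Fin n → ℝ) := by
    have := hs.map_nhds_eq_of_equiv
    rwa [hf0] at this
  have hmem : {y : Fin n → ℝ | ∃ i, y i = 0} ∈ nhds (0 : Fin n → ℝ) := by
    rw [← hmap, Filter.mem_map]
    filter_upwards with x
    exact himg x
  obtain ⟨ε, hε, hball⟩ := Metric.mem_nhds_iff.mp hmem
  have hy : (fun _ : Fin n => ε / 2) ∈ Metric.ball (0 : Fin n → ℝ) ε := by
    rw [Metric.mem_ball, dist_pi_lt_iff hε]
    intro i
    simp only [Pi.zero_apply, Real.dist_eq, sub_zero]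
    rw [abs_of_pos (by linarith)]
    linarith
  obtain ⟨i, hi⟩ := hball hy
  simp only at hi
  linarith
end

section
/- Let U be an open subset of ℝⁿ containing Λ = {x ∈ ℝⁿ : xᵢ = 0 for some i}. Then there exists a smooth map ĥ : ℝⁿ → U such that ĥ(x) = x for all x ∈ Λ. -/
open Set Metric

/-- For any sequence of bounds `A : ℕ → ℝ`, there is an entire (real-analytic) function
`f : ℝ → ℝ` with `f ≥ 1` everywhere and `f u ≥ A k` whenever `u ≥ k`. -/
lemma exists_analytic_dominating (A : ℕ → ℝ) :
    ∃ f : ℝ → ℝ, ContDiff ℝ (⊤ : ℕ∞) f ∧ (∀ u, 1 ≤ f u) ∧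
      ∀ (k : ℕ) (u : ℝ), (k : ℝ) ≤ u → A k ≤ f u := by
  set B : ℕ → ℝ := fun k => max (A k) 1 with hBdef
  have hB1 : ∀ k, 1 ≤ B k := fun k => le_max_right _ _
  have hB0 : ∀ k, 0 < B k := fun k => lt_of_lt_of_le one_pos (hB1 k)
  set N : ℕ → ℝ := fun k => (k : ℝ) + Real.log (B k) with hNdef
  have hN0 : ∀ k, 0 ≤ N k := fun k =>
    add_nonneg (Nat.cast_nonneg k) (Real.log_nonneg (hB1 k))
  -- the key tail bound
  have key : ∀ (M : ℝ) (k : ℕ), M + 1 ≤ (k : ℝ) →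
      B k * Real.exp (N k * (M - k)) ≤ Real.exp (-(k : ℝ)) := by
    intro M k hk
    have h1 : M - k ≤ -1 := by linarith
    have h2 : N k * (M - k) ≤ -(N k) := by
      have := mul_le_mul_of_nonneg_left h1 (hN0 k)
      linarith
    calc B k * Real.exp (N k * (M - k)) ≤ B k * Real.exp (-(N k)) := by gcongr
      _ = Real.exp (-(k : ℝ)) := by
          rw [hNdef]
          rw [neg_add, Real.exp_add, Real.exp_neg (Real.log (B k)), Real.exp_log (hB0 k)]
          field_simp
          exact div_self (hB0 k).ne'
  -- summability of the bounding series
  have hsum : ∀ M : ℝ, Summable (fun k => B k * Real.exp (N k * (M - k))) := by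
    intro M
    rw [← summable_nat_add_iff (⌈M⌉₊ + 1)]
    have hbound : ∀ k : ℕ, B (k + (⌈M⌉₊ + 1)) *
        Real.exp (N (k + (⌈M⌉₊ + 1)) * (M - ((k + (⌈M⌉₊ + 1) : ℕ) : ℝ))) ≤
        Real.exp (-(((k + (⌈M⌉₊ + 1) : ℕ)) : ℝ)) := by
      intro k
      apply key
      have h1 : M ≤ (⌈M⌉₊ : ℝ) := Nat.le_ceil M
      push_cast
      linarith
    apply Summable.of_nonneg_of_le (fun k => by positivity) hbound
    have hs : Summable fun k : ℕ => Real.exp (-(k : ℝ)) := Real.summable_exp_neg_nat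
    exact_mod_cast (summable_nat_add_iff (⌈M⌉₊ + 1)).2 hs
  -- the complex function
  set c : ℕ → ℂ → ℂ := fun k z => (B k : ℂ) * Complex.exp ((N k : ℂ) * (z - (k : ℕ))) with hcdef
  have hcdiff : ∀ k, Differentiable ℂ (c k) := by
    intro k
    apply (differentiable_const _).mul
    exact Complex.differentiable_exp.comp ((differentiable_id.sub_const _).const_mul _)
  have hcnorm : ∀ (k : ℕ) (z : ℂ), ‖c k z‖ = B k * Real.exp (N k * (z.re - k)) := by
    intro k z
    rw [hcdef]
    simp only [norm_mul, Complex.norm_real, Real.norm_eq_abs, Complex.norm_exp]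
    rw [abs_of_pos (hB0 k)]
    congr 2
    simp [Complex.mul_re]
  set F : ℂ → ℂ := fun z => ∑' k, c k z with hFdef
  have hopen : ∀ M : ℝ, IsOpen {z : ℂ | z.re < M} := fun M =>
    isOpen_lt Complex.continuous_re continuous_const
  have hFdiff : ∀ M : ℝ, DifferentiableOn ℂ F {z : ℂ | z.re < M} := by
    intro M
    apply Complex.differentiableOn_tsum_of_summable_norm (hsum M)
      (fun k => (hcdiff k).differentiableOn) (hopen M)
    intro k w hw
    rw [hcnorm]
    gcongr
    · exact hN0 k
    · exact le_of_lt hw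
  have hFan : AnalyticOnNhd ℂ F univ := by
    intro z _
    exact (hFdiff (z.re + 1)).analyticOnNhd (hopen _) z (by simpa using lt_add_one z.re)
  have hFC : ContDiff ℝ (⊤ : ℕ∞) F := (hFan.restrictScalars).contDiff
  -- relation with the real series
  have hFu : ∀ u : ℝ, F (u : ℂ) = ((∑' k, B k * Real.exp (N k * (u - k)) : ℝ) : ℂ) := by
    intro u
    rw [Complex.ofReal_tsum]
    apply tsum_congr
    intro k
    rw [hcdef]
    push_cast [Complex.ofReal_exp]
    ring_nf
  refine ⟨fun u => 1 + ∑' k, B k * Real.exp (N k * (u - k)), ?_, ?_, ?_⟩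
  · have h1 : ContDiff ℝ (⊤ : ℕ∞) (fun u : ℝ => 1 + (F (u : ℂ)).re) :=
      contDiff_const.add (Complex.reCLM.contDiff.comp (hFC.comp Complex.ofRealCLM.contDiff))
    convert h1 using 2 with u
    rw [hFu u, Complex.ofReal_re]
  · intro u
    show (1 : ℝ) ≤ 1 + ∑' k, B k * Real.exp (N k * (u - k))
    have : 0 ≤ ∑' k, B k * Real.exp (N k * (u - k)) :=
      tsum_nonneg (fun k => by positivity)
    linarith
  · intro k u hku
    show A k ≤ 1 + ∑' j, B j * Real.exp (N j * (u - j))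
    have hterm : B k * Real.exp (N k * (u - k)) ≤ ∑' j, B j * Real.exp (N j * (u - j)) :=
      Summable.le_tsum (hsum u) k (fun j _ => by positivity)
    have hAB : A k ≤ B k := le_max_left _ _
    have hexp1 : (1 : ℝ) ≤ Real.exp (N k * (u - k)) :=
      Real.one_le_exp (mul_nonneg (hN0 k) (by linarith))
    nlinarith [hB0 k]

theorem stmt_6 (n : ℕ) (hn : 1 ≤ n) (U : Set (Fin n → ℝ)) (hU : IsOpen U)
    (hΛ : {x : Fin n → ℝ | ∃ i, x i = 0} ⊆ U) :
    ∃ h : (Fin n → ℝ) → (Fin n → ℝ), ContDiff ℝ (⊤ : ℕ∞) h ∧ (∀ x, h x ∈ U) ∧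
      ∀ x : Fin n → ℝ, (∃ i, x i = 0) → h x = x := by
  by_cases hUuniv : U = Set.univ
  · exact ⟨id, contDiff_id, fun x => by simp [hUuniv], fun x _ => rfl⟩
  have hcne : Uᶜ.Nonempty := Set.nonempty_compl.2 hUuniv
  have hUc : IsClosed Uᶜ := hU.isClosed_compl
  haveI : Nonempty (Fin n) := ⟨⟨0, hn⟩⟩
  have hΛ0 : (0 : Fin n → ℝ) ∈ {x : Fin n → ℝ | ∃ i, x i = 0} := ⟨⟨0, hn⟩, rfl⟩
  have hΛclosed : IsClosed {x : Fin n → ℝ | ∃ i, x i = 0} := by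
    have : {x : Fin n → ℝ | ∃ i, x i = 0} = ⋃ i : Fin n, {x : Fin n → ℝ | x i = 0} := by
      ext x; simp
    rw [this]
    exact isClosed_iUnion_of_finite fun i =>
      isClosed_eq (continuous_apply i) continuous_const
  -- safety margins μ k on balls of radius k
  have hμex : ∀ k : ℕ, ∃ m : ℝ, 0 < m ∧
      ∀ z ∈ {x : Fin n → ℝ | ∃ i, x i = 0} ∩ Metric.closedBall 0 k,
        m ≤ Metric.infDist z Uᶜ := by
    intro k
    have hcpt : IsCompact ({x : Fin n → ℝ | ∃ i, x i = 0} ∩ Metric.closedBall 0 k) :=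
      (isCompact_closedBall _ _).inter_left hΛclosed
    have hne : ({x : Fin n → ℝ | ∃ i, x i = 0} ∩ Metric.closedBall 0 k).Nonempty :=
      ⟨0, hΛ0, Metric.mem_closedBall_self (by positivity)⟩
    obtain ⟨z₀, hz₀mem, hz₀min⟩ := hcpt.exists_isMinOn hne
      (Metric.continuous_infDist_pt Uᶜ).continuousOn
    refine ⟨Metric.infDist z₀ Uᶜ, ?_, fun z hz => hz₀min hz⟩
    have hz₀U : z₀ ∈ U := hΛ hz₀mem.1
    exact (hUc.notMem_iff_infDist_pos hcne).1 (by simpa using hz₀U)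
  choose μ hμpos hμ using hμex
  set A : ℕ → ℝ := fun k => (k : ℝ) / ((μ k / 2) ^ (2 * n) * μ k) + 1 with hAdef
  obtain ⟨f, hfC, hf1, hfA⟩ := exists_analytic_dominating A
  set g : (Fin n → ℝ) → ℝ := fun x => f (∑ i, x i ^ 2 + 2) with hgdef
  set q : (Fin n → ℝ) → ℝ := fun x => (∏ i, x i) ^ 2 * g x with hqdef
  have hg1 : ∀ x, 1 ≤ g x := fun x => hf1 _
  have hq0 : ∀ x, 0 ≤ q x := fun x => mul_nonneg (sq_nonneg _) (by linarith [hg1 x])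
  refine ⟨fun x => Real.exp (-q x) • x, ?_, ?_, ?_⟩
  · -- smoothness
    have hproj : ∀ i, ContDiff ℝ (⊤ : ℕ∞) (fun x : Fin n → ℝ => x i) :=
      fun i => (contDiff_pi.1 contDiff_id) i
    have hgC : ContDiff ℝ (⊤ : ℕ∞) g :=
      hfC.comp ((ContDiff.sum (fun i _ => (hproj i).pow 2)).add contDiff_const)
    have hpC : ContDiff ℝ (⊤ : ℕ∞) (fun x : Fin n → ℝ => ∏ i, x i) := by
      have heq : (fun x : Fin n → ℝ => ∏ i, x i) =
          (∏ i : Fin n, fun x : Fin n → ℝ => x i) := by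
        ext x
        rw [Finset.prod_apply]
      rw [heq]
      exact contDiff_prod' (fun i _ => hproj i)
    exact (Real.contDiff_exp.comp ((hpC.pow 2).mul hgC).neg).smul contDiff_id
  · -- maps into U
    intro x
    show Real.exp (-q x) • x ∈ U
    by_cases hpx : (∏ i, x i) = 0
    · have hq : q x = 0 := by rw [hqdef]; simp [hpx]
      rw [hq]
      simp only [neg_zero, Real.exp_zero, one_smul]
      obtain ⟨i, -, hi⟩ := Finset.prod_eq_zero_iff.1 hpx
      exact hΛ ⟨i, hi⟩
    · set t := Real.exp (-q x) with htdef
      have ht1 : t ≤ 1 := Real.exp_le_one_iff.2 (by linarith [hq0 x])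
      have ht0 : 0 < t := Real.exp_pos _
      obtain ⟨i₀, -, hi₀⟩ := Finset.exists_min_image Finset.univ
        (fun i => |x i|) Finset.univ_nonempty
      set s := |x i₀| with hsdef
      have hs_le : ∀ i, s ≤ |x i| := fun i => hi₀ i (Finset.mem_univ i)
      have hxi₀ : x i₀ ≠ 0 := fun h => hpx (Finset.prod_eq_zero (Finset.mem_univ i₀) h)
      have hs0 : 0 < s := abs_pos.2 hxi₀
      set k := ⌈‖x‖⌉₊ with hkdef
      have hxk : ‖x‖ ≤ (k : ℝ) := Nat.le_ceil _
      have hsx : s ≤ ‖x‖ := by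
        rw [hsdef, ← Real.norm_eq_abs]
        exact norm_le_pi_norm x i₀
      -- the witness point z on Λ
      set w : Fin n → ℝ := t • x with hwdef
      set z : Fin n → ℝ := Function.update w i₀ 0 with hzdef
      have hzΛ : z ∈ {x : Fin n → ℝ | ∃ i, x i = 0} := ⟨i₀, Function.update_self i₀ 0 w⟩
      have hwz : dist w z ≤ t * s := by
        rw [dist_pi_le_iff (by positivity)]
        intro i
        rcases eq_or_ne i i₀ with rfl | hne
        · rw [hzdef]
          simp only [Function.update_self]
          rw [Real.dist_eq, sub_zero, hwdef]
          simp only [Pi.smul_apply, smul_eq_mul, abs_mul, abs_of_pos ht0]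
          rw [hsdef]
        · rw [hzdef]
          simp only [Function.update_of_ne hne]
          rw [dist_self]
          positivity
      have hwx : ∀ i, |w i| ≤ ‖x‖ := by
        intro i
        rw [hwdef]
        simp only [Pi.smul_apply, smul_eq_mul, abs_mul, abs_of_pos ht0]
        calc t * |x i| ≤ 1 * |x i| := by gcongr
          _ = |x i| := one_mul _
          _ ≤ ‖x‖ := by rw [← Real.norm_eq_abs]; exact norm_le_pi_norm x i
      have hzball : z ∈ Metric.closedBall (0 : Fin n → ℝ) k := by
        rw [Metric.mem_closedBall, dist_zero_right]
        rw [pi_norm_le_iff_of_nonneg (Nat.cast_nonneg k)]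
        intro i
        rcases eq_or_ne i i₀ with rfl | hne
        · rw [hzdef]
          simp only [Function.update_self, norm_zero]
          exact Nat.cast_nonneg k
        · rw [hzdef]
          simp only [Function.update_of_ne hne, Real.norm_eq_abs]
          exact (hwx i).trans hxk
      have hμz : μ k ≤ Metric.infDist z Uᶜ := hμ k z ⟨hzΛ, hzball⟩
      -- main estimate : t * s < μ k
      have hts : t * s < μ k := by
        rcases le_or_gt s (μ k / 2) with hcase | hcase
        · calc t * s ≤ 1 * s := by gcongr
            _ = s := one_mul _
            _ ≤ μ k / 2 := hcase
            _ < μ k := by linarith [hμpos k]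
        · -- s > μ k / 2
          set D := (μ k / 2) ^ (2 * n) with hDdef
          have hD0 : 0 < D := by
            rw [hDdef]
            exact pow_pos (by linarith [hμpos k]) _
          have hgA : A k ≤ g x := by
            apply hfA
            have h1 : (k : ℝ) ≤ ‖x‖ + 1 := le_of_lt (Nat.ceil_lt_add_one (norm_nonneg x))
            have h2 : ‖x‖ ≤ ‖x‖ ^ 2 + 1 := by nlinarith [sq_nonneg (‖x‖ - 1)]
            have h3 : ‖x‖ ^ 2 ≤ ∑ i, x i ^ 2 := by
              obtain ⟨j, -, hj⟩ := Finset.exists_max_image Finset.univ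
                (fun i => |x i|) Finset.univ_nonempty
              have hxj : ‖x‖ ≤ |x j| := by
                rw [pi_norm_le_iff_of_nonneg (abs_nonneg _)]
                intro i
                exact hj i (Finset.mem_univ i)
              calc ‖x‖ ^ 2 ≤ |x j| ^ 2 := by gcongr
                _ = x j ^ 2 := sq_abs _
                _ ≤ ∑ i, x i ^ 2 :=
                    Finset.single_le_sum (fun i _ => sq_nonneg (x i)) (Finset.mem_univ j)
            linarith
          have hsn : s ^ n ≤ |∏ i, x i| := by
            rw [Finset.abs_prod]
            calc s ^ n = ∏ _i : Fin n, s := by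
                  rw [Finset.prod_const, Finset.card_univ, Fintype.card_fin]
              _ ≤ ∏ i, |x i| := Finset.prod_le_prod (fun i _ => hs0.le) (fun i _ => hs_le i)
          have hs2n : s ^ (2 * n) ≤ (∏ i, x i) ^ 2 := by
            calc s ^ (2 * n) = (s ^ n) ^ 2 := by rw [← pow_mul, Nat.mul_comm]
              _ ≤ |∏ i, x i| ^ 2 := by gcongr <;> positivity
              _ = (∏ i, x i) ^ 2 := sq_abs _
          have hv0 : 0 < s ^ (2 * n) * g x := by
            have := hg1 x; positivity
          have hqv : s ^ (2 * n) * g x ≤ q x := by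
            rw [hqdef]
            exact mul_le_mul_of_nonneg_right hs2n (by linarith [hg1 x])
          -- exp(-q) ≤ 1 / (s^(2n) * g)
          have hexp : t ≤ 1 / (s ^ (2 * n) * g x) := by
            have h1 : t ≤ Real.exp (-(s ^ (2 * n) * g x)) :=
              Real.exp_le_exp.2 (by linarith)
            have h2 : s ^ (2 * n) * g x ≤ Real.exp (s ^ (2 * n) * g x) := by
              have := Real.add_one_le_exp (s ^ (2 * n) * g x)
              linarith
            have h3 : Real.exp (-(s ^ (2 * n) * g x)) ≤ 1 / (s ^ (2 * n) * g x) := by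
              rw [Real.exp_neg, one_div]
              exact inv_anti₀ hv0 h2
            linarith
          have hchain : t * s ≤ (k : ℝ) / (D * g x) := by
            calc t * s ≤ (1 / (s ^ (2 * n) * g x)) * s :=
                  mul_le_mul_of_nonneg_right hexp hs0.le
              _ = s / (s ^ (2 * n) * g x) := by ring
              _ ≤ (k : ℝ) / (D * g x) := by
                  apply div_le_div₀ (Nat.cast_nonneg k) (hsx.trans hxk)
                    (mul_pos hD0 (by linarith [hg1 x]))
                  have hDs : D ≤ s ^ (2 * n) := by
                    rw [hDdef]
                    exact pow_le_pow_left₀ (by linarith [hμpos k]) hcase.le _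
                  exact mul_le_mul_of_nonneg_right hDs (by linarith [hg1 x])
          have hfinal : (k : ℝ) / (D * g x) < μ k := by
            rw [div_lt_iff₀ (mul_pos hD0 (by linarith [hg1 x]))]
            have hAk : (k : ℝ) / (D * μ k) + 1 ≤ g x := by
              have := hgA
              rw [hAdef] at this
              simpa [hDdef] using this
            have hDμ : 0 < D * μ k := mul_pos hD0 (hμpos k)
            have hkey : ((k : ℝ) / (D * μ k)) * (D * μ k) = (k : ℝ) :=
              div_mul_cancel₀ _ (ne_of_gt hDμ)
            nlinarith [mul_le_mul_of_nonneg_right hAk hDμ.le, hDμ]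
          linarith
      -- conclude membership
      by_contra hwU
      have h1 : Metric.infDist z Uᶜ ≤ dist z w := Metric.infDist_le_dist_of_mem hwU
      rw [dist_comm] at h1
      linarith
  · -- identity on Λ
    intro x ⟨i, hi⟩
    have hpx : (∏ j, x j) = 0 := Finset.prod_eq_zero (Finset.mem_univ i) hi
    have hqz : q x = 0 := by rw [hqdef]; simp [hpx]
    show Real.exp (-q x) • x = x
    rw [hqz]
    simp
end

section
/- Let U be an open subset of ℝⁿ containing Λ = {x ∈ ℝⁿ : xᵢ = 0 for some i}, let Y be any set, and let g : U → Y be a function. Then there exists a function h : ℝⁿ → Y with h = g ∘ ĥ for a smooth map ĥ : ℝⁿ → U restricting to the identity on Λ; in particular h agrees with g on Λ. -/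
open Set Filter

noncomputable def auxN (M : ℕ → ℝ) (k : ℕ) : ℕ := k + ⌈Real.logb 2 (M k)⌉₊

noncomputable def auxFc (M : ℕ → ℝ) (k : ℕ) (w : ℂ) : ℂ :=
  (M k : ℂ) * (w / ((k:ℂ)+1)) ^ (auxN M k)

noncomputable def auxHc (M : ℕ → ℝ) (w : ℂ) : ℂ := ∑' k, auxFc M k w

lemma auxkey (M : ℕ → ℝ) (hM : ∀ k, 1 ≤ M k) (k : ℕ) :
    M k * (1/2:ℝ) ^ (auxN M k) ≤ (1/2:ℝ) ^ k := by
  have hMpos : (0:ℝ) < M k := lt_of_lt_of_le one_pos (hM k)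
  have hM2 : M k ≤ (2:ℝ) ^ (⌈Real.logb 2 (M k)⌉₊) := by
    calc M k = (2:ℝ) ^ (Real.logb 2 (M k)) :=
          (Real.rpow_logb (by norm_num) (by norm_num) hMpos).symm
      _ ≤ (2:ℝ) ^ ((⌈Real.logb 2 (M k)⌉₊ : ℝ)) := by
          rw [Real.rpow_le_rpow_left_iff (by norm_num : (1:ℝ) < 2)]
          exact Nat.le_ceil _
      _ = (2:ℝ) ^ (⌈Real.logb 2 (M k)⌉₊) := Real.rpow_natCast 2 _
  have h1 : M k * (1/2:ℝ) ^ (⌈Real.logb 2 (M k)⌉₊) ≤ 1 := by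
    calc M k * (1/2:ℝ) ^ (⌈Real.logb 2 (M k)⌉₊)
        ≤ (2:ℝ) ^ (⌈Real.logb 2 (M k)⌉₊) * (1/2:ℝ) ^ (⌈Real.logb 2 (M k)⌉₊) :=
          mul_le_mul_of_nonneg_right hM2 (by positivity)
      _ = 1 := by rw [← mul_pow]; norm_num
  calc M k * (1/2:ℝ) ^ (auxN M k)
      = (M k * (1/2:ℝ) ^ (⌈Real.logb 2 (M k)⌉₊)) * (1/2:ℝ) ^ k := by
        rw [auxN, pow_add]; ring
    _ ≤ 1 * (1/2:ℝ) ^ k := mul_le_mul_of_nonneg_right h1 (by positivity)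
    _ = (1/2:ℝ) ^ k := one_mul _

lemma auxnorm (M : ℕ → ℝ) (hM : ∀ k, 1 ≤ M k) (k : ℕ) (w : ℂ) :
    ‖auxFc M k w‖ = M k * (‖w‖ / ((k:ℝ)+1)) ^ (auxN M k) := by
  have hMpos : (0:ℝ) < M k := lt_of_lt_of_le one_pos (hM k)
  have h1 : ((k:ℂ)+1) = (((k:ℝ)+1 : ℝ) : ℂ) := by push_cast; ring
  rw [auxFc]
  simp only [norm_mul, norm_pow, norm_div, h1, Complex.norm_real]
  rw [Real.norm_eq_abs, Real.norm_eq_abs, abs_of_pos hMpos,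
    abs_of_pos (by positivity : (0:ℝ) < (k:ℝ)+1)]

lemma auxbound (M : ℕ → ℝ) (hM : ∀ k, 1 ≤ M k) (R : ℝ) (k : ℕ) (hk : 2*R ≤ k)
    (w : ℂ) (hw : ‖w‖ ≤ R) : ‖auxFc M k w‖ ≤ (1/2:ℝ)^k := by
  have hMpos : (0:ℝ) < M k := lt_of_lt_of_le one_pos (hM k)
  have h2 : ‖w‖ / ((k:ℝ)+1) ≤ 1/2 := by
    rw [div_le_div_iff₀ (by positivity) (by norm_num)]
    nlinarith [norm_nonneg w]
  have h3 : (0:ℝ) ≤ ‖w‖ / ((k:ℝ)+1) := by positivity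
  rw [auxnorm M hM]
  calc M k * (‖w‖ / ((k:ℝ)+1)) ^ (auxN M k) ≤ M k * (1/2:ℝ) ^ (auxN M k) :=
        mul_le_mul_of_nonneg_left (pow_le_pow_left₀ h3 h2 _) hMpos.le
    _ ≤ (1/2:ℝ)^k := auxkey M hM k

lemma auxdiff (M : ℕ → ℝ) (hM : ∀ k, 1 ≤ M k) : Differentiable ℂ (auxHc M) := by
  intro w₀
  set R : ℝ := ‖w₀‖ + 1 with hR
  have tuo : TendstoUniformlyOn (fun (t : Finset ℕ) w => ∑ k ∈ t, auxFc M k w) (auxHc M) atTop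
      (Metric.closedBall 0 R) := by
    apply tendstoUniformlyOn_tsum_of_cofinite_eventually
      (summable_geometric_of_lt_one (by norm_num) (by norm_num : (1/2:ℝ) < 1))
    rw [Nat.cofinite_eq_atTop]
    filter_upwards [eventually_ge_atTop ⌈2*R⌉₊] with k hk w hw
    refine auxbound M hM R k ?_ w (by simpa [Metric.mem_closedBall, dist_eq_norm] using hw)
    exact le_trans (Nat.le_ceil _) (by exact_mod_cast hk)
  have tlu : TendstoLocallyUniformlyOn (fun (t : Finset ℕ) w => ∑ k ∈ t, auxFc M k w)
      (auxHc M) atTop (Metric.ball 0 R) :=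
    (tuo.mono Metric.ball_subset_closedBall).tendstoLocallyUniformlyOn
  have hd : DifferentiableOn ℂ (auxHc M) (Metric.ball 0 R) := by
    apply tlu.differentiableOn
    · refine Eventually.of_forall fun s => (Differentiable.fun_sum fun k _ => ?_).differentiableOn
      exact (differentiable_const _).mul ((differentiable_id.div_const _).pow _)
    · exact Metric.isOpen_ball
  have hmem : Metric.ball (0:ℂ) R ∈ nhds w₀ := by
    apply Metric.isOpen_ball.mem_nhds
    simp only [Metric.mem_ball, dist_eq_norm, sub_zero, hR]
    linarith
  exact hd.differentiableAt hmem

lemma auxlower (M : ℕ → ℝ) (hM : ∀ k, 1 ≤ M k) (t : ℝ) (ht : 0 ≤ t) :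
    0 ≤ (auxHc M ((1:ℂ) + (t:ℂ))).re ∧
      ∀ k : ℕ, (k:ℝ) ≤ t → M k ≤ (auxHc M ((1:ℂ) + (t:ℂ))).re := by
  have hMpos : ∀ k, (0:ℝ) < M k := fun k => lt_of_lt_of_le one_pos (hM k)
  set fr : ℕ → ℝ := fun k => M k * ((1+t) / ((k:ℝ)+1)) ^ (auxN M k) with hfr
  have hfr_nonneg : ∀ k, 0 ≤ fr k := fun k =>
    mul_nonneg (hMpos k).le (pow_nonneg (by positivity) _)
  have hfr_eq : ∀ k, auxFc M k ((1:ℂ) + (t:ℂ)) = ((fr k : ℝ) : ℂ) := by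
    intro k
    rw [auxFc, hfr]
    push_cast
    ring
  have hwnorm : ‖(1:ℂ) + (t:ℂ)‖ = 1 + t := by
    have h : (1:ℂ) + (t:ℂ) = (((1+t : ℝ)) : ℂ) := by push_cast; ring
    rw [h, Complex.norm_real, Real.norm_eq_abs, abs_of_pos (by linarith)]
  have hfr_summable : Summable fr := by
    rw [← summable_nat_add_iff ⌈2*(1+t)⌉₊]
    apply Summable.of_nonneg_of_le (fun j => hfr_nonneg _) ?_
      (summable_geometric_of_lt_one (by norm_num) (by norm_num : (1/2:ℝ) < 1))
    intro j
    have hb : ‖auxFc M (j + ⌈2*(1+t)⌉₊) ((1:ℂ) + (t:ℂ))‖ ≤ (1/2:ℝ) ^ (j + ⌈2*(1+t)⌉₊) := by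
      apply auxbound M hM (1+t) _ _ _ (le_of_eq hwnorm)
      calc 2*(1+t) ≤ (⌈2*(1+t)⌉₊ : ℝ) := Nat.le_ceil _
        _ ≤ ((j + ⌈2*(1+t)⌉₊ : ℕ) : ℝ) := by
            push_cast; linarith [Nat.cast_nonneg (α := ℝ) j]
    have heq : ‖auxFc M (j + ⌈2*(1+t)⌉₊) ((1:ℂ) + (t:ℂ))‖ = fr (j + ⌈2*(1+t)⌉₊) := by
      rw [hfr_eq, Complex.norm_real, Real.norm_eq_abs, abs_of_nonneg (hfr_nonneg _)]
    rw [← heq]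
    calc ‖auxFc M (j + ⌈2*(1+t)⌉₊) ((1:ℂ) + (t:ℂ))‖ ≤ (1/2:ℝ) ^ (j + ⌈2*(1+t)⌉₊) := hb
      _ ≤ (1/2:ℝ) ^ j := by
          apply pow_le_pow_of_le_one (by norm_num) (by norm_num)
          omega
  have hsumC : Summable (fun k => auxFc M k ((1:ℂ) + (t:ℂ))) := by
    simp only [hfr_eq]
    exact Complex.summable_ofReal.mpr hfr_summable
  have hGval : (auxHc M ((1:ℂ) + (t:ℂ))).re = ∑' k, fr k := by
    rw [auxHc, Complex.re_tsum hsumC]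
    congr 1
    funext k
    rw [hfr_eq, Complex.ofReal_re]
  constructor
  · rw [hGval]; exact tsum_nonneg hfr_nonneg
  · intro k hk
    rw [hGval]
    have h1 : (1:ℝ) ≤ (1+t) / ((k:ℝ)+1) := by
      rw [le_div_iff₀ (by positivity)]
      linarith
    have h2 : M k ≤ fr k := by
      rw [hfr]
      calc M k = M k * 1 := (mul_one _).symm
        _ ≤ M k * ((1+t) / ((k:ℝ)+1)) ^ (auxN M k) :=
            mul_le_mul_of_nonneg_left (one_le_pow₀ h1) (hMpos k).le
    exact le_trans h2 (Summable.le_tsum hfr_summable k (fun i _ => hfr_nonneg i))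

/-- An entire real-analytic function dominating a prescribed sequence of constants:
`G t ≥ M k` whenever `k ≤ t`. -/
lemma exists_entire_dominating (M : ℕ → ℝ) (hM : ∀ k, 1 ≤ M k) :
    ∃ G : ℝ → ℝ, ContDiff ℝ (⊤ : ℕ∞) G ∧ (∀ t : ℝ, 0 ≤ t → 0 ≤ G t) ∧
      ∀ t : ℝ, 0 ≤ t → ∀ k : ℕ, (k : ℝ) ≤ t → M k ≤ G t := by
  refine ⟨fun t => (auxHc M ((1:ℂ) + (t:ℂ))).re, ?_,
    fun t ht => (auxlower M hM t ht).1, fun t ht => (auxlower M hM t ht).2⟩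
  have han : AnalyticOnNhd ℝ (fun t : ℝ => (auxHc M ((1:ℂ) + (t:ℂ))).re) univ := by
    intro x _
    have h1 : AnalyticAt ℝ (fun t : ℝ => (1:ℂ) + (t:ℂ)) x :=
      analyticAt_const.add (Complex.ofRealCLM.analyticAt x)
    have h2 : AnalyticAt ℝ (auxHc M) ((1:ℂ) + (x:ℂ)) :=
      ((auxdiff M hM).analyticAt _).restrictScalars
    have h3 : AnalyticAt ℝ (Complex.reCLM : ℂ →L[ℝ] ℝ) (auxHc M ((1:ℂ) + (x:ℂ))) :=
      Complex.reCLM.analyticAt _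
    have h4 : AnalyticAt ℝ (auxHc M ∘ fun t : ℝ => (1:ℂ) + (t:ℂ)) x :=
      AnalyticAt.comp (f := fun t : ℝ => (1:ℂ) + (t:ℂ)) h2 h1
    have h5 : AnalyticAt ℝ ((Complex.reCLM : ℂ →L[ℝ] ℝ) ∘
        (auxHc M ∘ fun t : ℝ => (1:ℂ) + (t:ℂ))) x :=
      AnalyticAt.comp (f := auxHc M ∘ fun t : ℝ => (1:ℂ) + (t:ℂ)) h3 h4
    exact h5
  exact han.contDiff

theorem stmt_7 (n : ℕ) (hn : 1 ≤ n) (U : Set (Fin n → ℝ)) (hU : IsOpen U)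
    (hΛ : {x : Fin n → ℝ | ∃ i, x i = 0} ⊆ U)
    (Y : Type*) (g : (Fin n → ℝ) → Y) :
    ∃ (hhat : (Fin n → ℝ) → (Fin n → ℝ)) (h : (Fin n → ℝ) → Y),
      ContDiff ℝ (⊤ : ℕ∞) hhat ∧ (∀ x, hhat x ∈ U) ∧
      (∀ x : Fin n → ℝ, (∃ i, x i = 0) → hhat x = x) ∧
      h = g ∘ hhat ∧
      ∀ x : Fin n → ℝ, (∃ i, x i = 0) → h x = g x := by
  set Λ : Set (Fin n → ℝ) := {x : Fin n → ℝ | ∃ i, x i = 0} with hΛdef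
  have hΛ0 : (0 : Fin n → ℝ) ∈ Λ := ⟨⟨0, hn⟩, rfl⟩
  obtain ⟨δ, hδpos, hball⟩ := Metric.isOpen_iff.mp hU 0 (hΛ hΛ0)
  set V : Set (Fin n → ℝ) := {x | ∀ s ∈ Icc (0:ℝ) 1, s • x ∈ U} with hVdef
  have hΛV : Λ ⊆ V := by
    intro x ⟨i, hi⟩ s _
    exact hΛ ⟨i, by simp [hi]⟩
  set p : (Fin n → ℝ) → ℝ := fun x => ∏ i, x i with hp
  set e : (Fin n → ℝ) → ℝ := fun x => ∑ i, (x i)^2 with he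
  have he_nonneg : ∀ x, 0 ≤ e x := fun x => Finset.sum_nonneg fun i _ => sq_nonneg _
  have hnotV : ∀ x : Fin n → ℝ, x ∉ V → (p x ≠ 0 ∧ ‖x‖ ≠ 0) := by
    intro x hx
    have hxΛ : x ∉ Λ := fun h => hx (hΛV h)
    have hcoord : ∀ i, x i ≠ 0 := fun i hi => hxΛ ⟨i, hi⟩
    refine ⟨Finset.prod_ne_zero_iff.mpr fun i _ => hcoord i, fun h => ?_⟩
    rw [norm_eq_zero] at h
    exact hxΛ (h ▸ hΛ0)
  have hK : ∀ k : ℕ, ∃ C : ℝ, ∀ x : Fin n → ℝ, x ∉ V → e x ≤ (k:ℝ)+1 →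
      (Real.log (‖x‖ / δ) + 1) / (p x)^2 ≤ C := by
    intro k
    set K : Set (Fin n → ℝ) := {x | x ∉ V ∧ e x ≤ (k:ℝ)+1} with hKdef
    have hVopen : IsOpen V := by
      rw [isOpen_iff_mem_nhds]
      intro x hx
      have := (isCompact_Icc (a := (0:ℝ)) (b := 1)).eventually_forall_of_forall_eventually
        (x₀ := x) (P := fun x s => s • x ∈ U) (fun s hs => by
          have hc : Continuous fun z : (Fin n → ℝ) × ℝ => z.2 • z.1 :=
            continuous_snd.smul continuous_fst
          exact hc.continuousAt.preimage_mem_nhds (hU.mem_nhds (hx s hs)))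
      exact this
    have he_cont : Continuous e :=
      continuous_finset_sum _ fun i _ => (continuous_apply i).pow 2
    have hKclosed : IsClosed K :=
      (isClosed_compl_iff.mpr hVopen).inter (isClosed_le he_cont continuous_const)
    have hKsub : K ⊆ Metric.closedBall 0 (Real.sqrt ((k:ℝ)+1)) := by
      intro x ⟨_, hxe⟩
      rw [Metric.mem_closedBall, dist_zero_right]
      have hcoords : ∀ i, ‖x i‖ ≤ Real.sqrt ((k:ℝ)+1) := by
        intro i
        have h1 : (x i)^2 ≤ e x :=
          Finset.single_le_sum (f := fun i => (x i)^2)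
            (fun i _ => sq_nonneg _) (Finset.mem_univ i)
        rw [Real.norm_eq_abs, ← Real.sqrt_sq_eq_abs]
        exact Real.sqrt_le_sqrt (le_trans h1 hxe)
      exact (pi_norm_le_iff_of_nonneg (Real.sqrt_nonneg _)).mpr hcoords
    have hKcompact : IsCompact K :=
      (isCompact_closedBall 0 _).of_isClosed_subset hKclosed hKsub
    have hnd : ContinuousOn (fun x : Fin n → ℝ => ‖x‖ / δ) K :=
      continuous_norm.continuousOn.div_const δ
    have hlog : ContinuousOn (fun x : Fin n → ℝ => Real.log (‖x‖ / δ)) K := by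
      apply hnd.log
      intro x hx
      have := (hnotV x hx.1).2
      have hδ' : δ ≠ 0 := ne_of_gt hδpos
      positivity
    have hpc : ContinuousOn (fun x : Fin n → ℝ => (p x)^2) K :=
      ((continuous_finset_prod _ fun i _ => continuous_apply i).pow 2).continuousOn
    have hcont : ContinuousOn (fun x => (Real.log (‖x‖ / δ) + 1) / (p x)^2) K := by
      apply ContinuousOn.div (hlog.add continuousOn_const) hpc
      intro x hx
      exact pow_ne_zero 2 (hnotV x hx.1).1
    obtain ⟨B, hB⟩ := hKcompact.exists_bound_of_continuousOn hcont
    exact ⟨B, fun x hxV hxe => le_trans (le_abs_self _) (hB x ⟨hxV, hxe⟩)⟩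
  choose C hC using hK
  obtain ⟨G, hG_cd, hG_nonneg, hG_dom⟩ := exists_entire_dominating
    (fun k => max (C k) 1) (fun k => le_max_right _ _)
  set φ : (Fin n → ℝ) → ℝ := fun x => Real.exp (-((p x)^2 * G (e x))) with hφ
  have hφpos : ∀ x, 0 < φ x := fun x => Real.exp_pos _
  have hφone : ∀ x : Fin n → ℝ, p x = 0 → φ x = 1 := by
    intro x hpx
    show Real.exp (-((p x)^2 * G (e x))) = 1
    rw [hpx]
    norm_num
  refine ⟨fun x => φ x • x, g ∘ (fun x => φ x • x), ?_, ?_, ?_, rfl, ?_⟩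
  · -- smoothness (C^ω)
    have hp_cd : ContDiff ℝ (⊤ : ℕ∞) p := contDiff_prod fun i _ => contDiff_apply ℝ ℝ i
    have he_cd : ContDiff ℝ (⊤ : ℕ∞) e := ContDiff.sum fun i _ => (contDiff_apply ℝ ℝ i).pow 2
    have hφ_cd : ContDiff ℝ (⊤ : ℕ∞) φ :=
      Real.contDiff_exp.comp ((hp_cd.pow 2).mul (hG_cd.comp he_cd)).neg
    exact contDiff_pi.mpr fun i => hφ_cd.mul (contDiff_apply ℝ ℝ i)
  · -- membership in U
    intro x
    by_cases hx : x ∈ V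
    · refine hx (φ x) (mem_Icc.mpr ⟨(hφpos x).le, ?_⟩)
      show Real.exp (-((p x)^2 * G (e x))) ≤ 1
      rw [Real.exp_le_one_iff, neg_nonpos]
      exact mul_nonneg (sq_nonneg _) (hG_nonneg _ (he_nonneg x))
    · obtain ⟨hpne, hxne⟩ := hnotV x hx
      have hxpos : 0 < ‖x‖ := lt_of_le_of_ne (norm_nonneg x) (Ne.symm hxne)
      have hk1 : ((⌊e x⌋₊ : ℕ):ℝ) ≤ e x := Nat.floor_le (he_nonneg x)
      have hk2 : e x ≤ ((⌊e x⌋₊ : ℕ):ℝ)+1 := (Nat.lt_floor_add_one (e x)).le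
      have htarget : (Real.log (‖x‖ / δ) + 1) / (p x)^2 ≤ max (C ⌊e x⌋₊) 1 :=
        le_trans (hC ⌊e x⌋₊ x hx hk2) (le_max_left _ _)
      have hGe : max (C ⌊e x⌋₊) 1 ≤ G (e x) := hG_dom (e x) (he_nonneg x) ⌊e x⌋₊ hk1
      have hp2 : 0 < (p x)^2 := by
        rw [← sq_abs]
        exact pow_pos (abs_pos.mpr hpne) 2
      have hq : Real.log (‖x‖ / δ) + 1 ≤ (p x)^2 * G (e x) := by
        have h1 : Real.log (‖x‖ / δ) + 1 = ((Real.log (‖x‖ / δ) + 1) / (p x)^2) * (p x)^2 :=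
          (div_mul_cancel₀ _ (ne_of_gt hp2)).symm
        rw [h1, mul_comm ((p x)^2) (G (e x))]
        exact mul_le_mul_of_nonneg_right (le_trans htarget hGe) hp2.le
      have hφlt : φ x < δ / ‖x‖ := by
        show Real.exp (-((p x)^2 * G (e x))) < δ / ‖x‖
        have h3 : Real.log (δ / ‖x‖) = -Real.log (‖x‖ / δ) := by
          rw [← Real.log_inv, inv_div]
        have h2 : -((p x)^2 * G (e x)) < Real.log (δ / ‖x‖) := by
          rw [h3]; linarith
        calc Real.exp (-((p x)^2 * G (e x))) < Real.exp (Real.log (δ / ‖x‖)) :=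
              Real.exp_lt_exp.mpr h2
          _ = δ / ‖x‖ := Real.exp_log (by positivity)
      have hnlt : ‖φ x • x‖ < δ := by
        rw [norm_smul, Real.norm_eq_abs, abs_of_pos (hφpos x)]
        calc φ x * ‖x‖ < (δ / ‖x‖) * ‖x‖ := mul_lt_mul_of_pos_right hφlt hxpos
          _ = δ := div_mul_cancel₀ _ (ne_of_gt hxpos)
      exact hball (by rwa [Metric.mem_ball, dist_zero_right])
  · -- identity on Λ
    intro x ⟨i, hi⟩
    have hpx : p x = 0 := Finset.prod_eq_zero (Finset.mem_univ i) hi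
    show φ x • x = x
    rw [hφone x hpx, one_smul]
  · -- agreement with g on Λ
    intro x ⟨i, hi⟩
    have hpx : p x = 0 := Finset.prod_eq_zero (Finset.mem_univ i) hi
    show g (φ x • x) = g x
    rw [hφone x hpx, one_smul]
end

section
/- For every t ∈ [0,1] and every x = (x₀,…,xₙ) ∈ ℝⁿ⁺¹ with Σ xᵢ = 1, the sum Σᵢ (t·xᵢ + (1-t)·ρ(xᵢ)) is strictly positive, where ρ is as above (smooth, nonnegative, with ρ(y) > 0 for y ≥ 1/(n+1)). -/
theorem stmt_10 (n : ℕ) (ρ : ℝ → ℝ) (hρ : ContDiff ℝ (⊤ : ℕ∞) ρ)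
    (hρnn : ∀ y, 0 ≤ ρ y)
    (hρpos : ∀ y : ℝ, 1 / (n + 1) ≤ y → 0 < ρ y) :
    ∀ t ∈ Set.Icc (0 : ℝ) 1, ∀ x : Fin (n + 1) → ℝ, ∑ i, x i = 1 →
      0 < ∑ i, (t * x i + (1 - t) * ρ (x i)) := by
  rintro t ⟨ht0, ht1⟩ x hx
  -- some coordinate is at least 1/(n+1)
  obtain ⟨i, hi⟩ : ∃ i, 1 / ((n : ℝ) + 1) ≤ x i := by
    by_contra h
    push_neg at h
    have : ∑ i, x i < ∑ _i : Fin (n + 1), 1 / ((n : ℝ) + 1) :=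
      Finset.sum_lt_sum_of_nonempty (by simp) (fun i _ => h i)
    rw [hx, Finset.sum_const, Finset.card_univ, Fintype.card_fin, nsmul_eq_mul] at this
    have hn : ((n : ℝ) + 1) ≠ 0 := by positivity
    rw [mul_one_div] at this
    push_cast at this
    rw [div_self hn] at this
    exact lt_irrefl _ this
  have hρi : 0 < ρ (x i) := hρpos _ (by push_cast at hi ⊢; linarith)
  have hsum : ∑ j, (t * x j + (1 - t) * ρ (x j))
      = t + (1 - t) * ∑ j, ρ (x j) := by
    rw [Finset.sum_add_distrib, ← Finset.mul_sum, ← Finset.mul_sum, hx, mul_one]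
  rw [hsum]
  have hle : ρ (x i) ≤ ∑ j, ρ (x j) :=
    Finset.single_le_sum (fun j _ => hρnn (x j)) (Finset.mem_univ i)
  rcases eq_or_lt_of_le ht0 with h | h
  · rw [← h]; simp; linarith
  · nlinarith [Finset.sum_nonneg (fun j (_ : j ∈ Finset.univ) => hρnn (x j))]
end

section
/- The map h : ℝⁿ⁺² → X defined piecewise by h(x₀,…,x_{n+1}) = f(x₀,…,x_{n-2}, xₙ + 2x_{n-1}, x_{n+1} - x_{n-1}) when x_{n+1} ≥ x_{n-1}, and h(x₀,…,x_{n+1}) = g(x₀,…,x_{n-2}, x_{n-1} - x_{n+1}, xₙ + 2x_{n+1}) when x_{n+1} ≤ x_{n-1}, is smooth, provided f, g : ℝⁿ → X are smooth maps into a smooth manifold X that are constant (equal to a fixed point) on the region where the last coordinate is < ε or the second-to-last coordinate is < ε. -/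
open scoped Manifold

theorem stmt_15 (n : ℕ) (hn : 1 ≤ n) (ε : ℝ) (hε : 0 < ε)
    {E : Type*} [NormedAddCommGroup E] [NormedSpace ℝ E]
    {H : Type*} [TopologicalSpace H] (I : ModelWithCorners ℝ E H)
    {X : Type*} [TopologicalSpace X] [ChartedSpace H X]
    [IsManifold I (⊤ : ℕ∞) X]
    (f g : (Fin (n + 1) → ℝ) → X)
    (hf : ContMDiff 𝓘(ℝ, Fin (n + 1) → ℝ) I (⊤ : ℕ∞) f)
    (hg : ContMDiff 𝓘(ℝ, Fin (n + 1) → ℝ) I (⊤ : ℕ∞) g)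
    (x₀ : X)
    (hfc : ∀ x : Fin (n + 1) → ℝ,
      x (Fin.last n) < ε ∨ x ⟨n - 1, by omega⟩ < ε → f x = x₀)
    (hgc : ∀ x : Fin (n + 1) → ℝ,
      x (Fin.last n) < ε ∨ x ⟨n - 1, by omega⟩ < ε → g x = x₀) :
    ContMDiff 𝓘(ℝ, Fin (n + 2) → ℝ) I (⊤ : ℕ∞)
      (fun x : Fin (n + 2) → ℝ =>
        if x (Fin.last (n + 1)) ≥ x ⟨n - 1, by omega⟩ then
          f (fun i : Fin (n + 1) =>
            if (i : ℕ) < n - 1 then x ⟨i, by omega⟩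
            else if (i : ℕ) = n - 1 then x ⟨n, by omega⟩ + 2 * x ⟨n - 1, by omega⟩
            else x (Fin.last (n + 1)) - x ⟨n - 1, by omega⟩)
        else
          g (fun i : Fin (n + 1) =>
            if (i : ℕ) < n - 1 then x ⟨i, by omega⟩
            else if (i : ℕ) = n - 1 then x ⟨n - 1, by omega⟩ - x (Fin.last (n + 1))
            else x ⟨n, by omega⟩ + 2 * x (Fin.last (n + 1)))) := by
  have hj : n - 1 < n + 2 := by omega
  have hknn : (n : ℕ) < n + 2 := by omega
  -- smoothness of the two affine reparametrizations
  have hA : ContDiff ℝ (⊤ : ℕ∞) (fun x : Fin (n + 2) → ℝ => fun i : Fin (n + 1) =>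
      if (i : ℕ) < n - 1 then x ⟨i, by omega⟩
      else if (i : ℕ) = n - 1 then x ⟨n, by omega⟩ + 2 * x ⟨n - 1, by omega⟩
      else x (Fin.last (n + 1)) - x ⟨n - 1, by omega⟩) := by
    apply contDiff_pi.2
    intro i
    split_ifs
    · exact contDiff_apply ℝ ℝ _
    · exact (contDiff_apply ℝ ℝ _).add (contDiff_const.mul (contDiff_apply ℝ ℝ _))
    · exact (contDiff_apply ℝ ℝ _).sub (contDiff_apply ℝ ℝ _)
  have hB : ContDiff ℝ (⊤ : ℕ∞) (fun x : Fin (n + 2) → ℝ => fun i : Fin (n + 1) =>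
      if (i : ℕ) < n - 1 then x ⟨i, by omega⟩
      else if (i : ℕ) = n - 1 then x ⟨n - 1, by omega⟩ - x (Fin.last (n + 1))
      else x ⟨n, by omega⟩ + 2 * x (Fin.last (n + 1))) := by
    apply contDiff_pi.2
    intro i
    split_ifs
    · exact contDiff_apply ℝ ℝ _
    · exact (contDiff_apply ℝ ℝ _).sub (contDiff_apply ℝ ℝ _)
    · exact (contDiff_apply ℝ ℝ _).add (contDiff_const.mul (contDiff_apply ℝ ℝ _))
  intro x
  rcases lt_trichotomy (x ⟨n - 1, hj⟩) (x (Fin.last (n + 1))) with hlt | heq | hgt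
  · -- f region
    have hU : {y : Fin (n + 2) → ℝ | y ⟨n - 1, hj⟩ < y (Fin.last (n + 1))} ∈ nhds x :=
      (isOpen_lt (f := fun y : Fin (n + 2) → ℝ => y ⟨n - 1, hj⟩)
        (g := fun y : Fin (n + 2) → ℝ => y (Fin.last (n + 1)))
        (continuous_apply _) (continuous_apply _)).mem_nhds hlt
    apply ContMDiffAt.congr_of_eventuallyEq
      ((hf.comp (hA.of_le (by simp)).contMDiff).contMDiffAt)
    filter_upwards [hU] with y hy
    exact if_pos hy.le
  · -- overlap region: locally constant
    have h1 : {y : Fin (n + 2) → ℝ | y (Fin.last (n + 1)) - y ⟨n - 1, hj⟩ < ε} ∈ nhds x := by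
      refine (isOpen_lt (f := fun y : Fin (n + 2) → ℝ => y (Fin.last (n + 1)) - y ⟨n - 1, hj⟩)
        ((continuous_apply _).sub (continuous_apply _)) continuous_const).mem_nhds ?_
      simp only [Set.mem_setOf_eq, heq, sub_self]
      exact hε
    have h2 : {y : Fin (n + 2) → ℝ | y ⟨n - 1, hj⟩ - y (Fin.last (n + 1)) < ε} ∈ nhds x := by
      refine (isOpen_lt (f := fun y : Fin (n + 2) → ℝ => y ⟨n - 1, hj⟩ - y (Fin.last (n + 1)))
        ((continuous_apply _).sub (continuous_apply _)) continuous_const).mem_nhds ?_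
      simp only [Set.mem_setOf_eq, heq, sub_self]
      exact hε
    apply ContMDiffAt.congr_of_eventuallyEq (contMDiffAt_const (c := x₀))
    filter_upwards [h1, h2] with y hy1 hy2
    split_ifs with hcond
    · refine hfc _ (Or.inl ?_)
      have hv : (if (n : ℕ) < n - 1 then y ⟨n, by omega⟩
          else if (n : ℕ) = n - 1 then y ⟨n, by omega⟩ + 2 * y ⟨n - 1, by omega⟩
          else y (Fin.last (n + 1)) - y ⟨n - 1, hj⟩) < ε := by
        rw [if_neg (by omega), if_neg (by omega)]
        exact hy1
      exact hv
    · refine hgc _ (Or.inr ?_)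
      have hv : (if (n - 1 : ℕ) < n - 1 then y ⟨n - 1, by omega⟩
          else if (n - 1 : ℕ) = n - 1 then y ⟨n - 1, hj⟩ - y (Fin.last (n + 1))
          else y ⟨n, by omega⟩ + 2 * y (Fin.last (n + 1))) < ε := by
        rw [if_neg (by omega), if_pos rfl]
        exact hy2
      exact hv
  · -- g region
    have hU : {y : Fin (n + 2) → ℝ | y (Fin.last (n + 1)) < y ⟨n - 1, hj⟩} ∈ nhds x :=
      (isOpen_lt (f := fun y : Fin (n + 2) → ℝ => y (Fin.last (n + 1)))
        (g := fun y : Fin (n + 2) → ℝ => y ⟨n - 1, hj⟩)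
        (continuous_apply _) (continuous_apply _)).mem_nhds hgt
    apply ContMDiffAt.congr_of_eventuallyEq
      ((hg.comp (hB.of_le (by simp)).contMDiff).contMDiffAt)
    filter_upwards [hU] with y hy
    exact if_neg (not_le.mpr hy)
end

section
/- Let G be a group that is also a smooth manifold with smooth multiplication and inversion (a Lie group), and let F : Λ → G be a function on Λ = {x ∈ ℝⁿ : xᵢ = 0 for some i} that is smooth on each coordinate hyperplane. If G is abelian, then the map F̃ : ℝⁿ → G defined by F̃(x) = Σ_{k=0}^{n-1} Σ_{1 ≤ i₁ < ⋯ < i_k ≤ n} (-1)^{n-k+1} F(P_{i₁,…,i_k}(x)) (sum in the group G, written additively) is smooth and restricts to F on Λ, where P_{i₁,…,i_k} : ℝⁿ → Λ is the orthogonal projection killing all coordinates outside {i₁,…,i_k}. -/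
/-! Each summand only sees the coordinates in a proper subset `s`, so it factors through the
projection onto a hyperplane `xᵢ = 0` and is smooth. If `x i = 0`, the summands for `s` and
`insert i s` coincide and carry opposite signs, so the alternating sum over all subsets vanishes;
the missing term `s = univ` is `-F x`. -/

open scoped Manifold
open Finset Function

section LieAddGroup

variable {𝕜 : Type*} [NontriviallyNormedField 𝕜] {n : WithTop ℕ∞}
  {E : Type*} [NormedAddCommGroup E] [NormedSpace 𝕜 E]
  {H : Type*} [TopologicalSpace H] {I : ModelWithCorners 𝕜 E H}
  {G : Type*} [AddGroup G] [TopologicalSpace G] [ChartedSpace H G] [LieAddGroup I n G]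
  {E' : Type*} [NormedAddCommGroup E'] [NormedSpace 𝕜 E']
  {H' : Type*} [TopologicalSpace H'] {I' : ModelWithCorners 𝕜 E' H'}
  {M : Type*} [TopologicalSpace M] [ChartedSpace H' M]

theorem ContMDiff.zsmul {f : M → G} (hf : ContMDiff I' I n f) :
    ∀ z : ℤ, ContMDiff I' I n fun x => z • f x
  | .ofNat k => by
    simpa only [Int.ofNat_eq_natCast, natCast_zsmul, comp_def] using (contMDiff_nsmul k).comp hf
  | .negSucc k => by
    simpa only [negSucc_zsmul, comp_def] using ((contMDiff_nsmul (k + 1)).comp hf).neg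

end LieAddGroup

section CoordinateProjection

variable {𝕜 : Type*} [NontriviallyNormedField 𝕜] {n : WithTop ℕ∞}
  {ι : Type*} [Fintype ι] {E : Type*} [NormedAddCommGroup E] [NormedSpace 𝕜 E]

theorem contMDiff_piecewise_zero (s : Finset ι) [DecidablePred (· ∈ s)] :
    ContMDiff 𝓘(𝕜, ι → E) 𝓘(𝕜, ι → E) n fun x : ι → E => s.piecewise x 0 := by
  refine contMDiff_iff_contDiff.2 (contDiff_pi.2 fun j => ?_)
  by_cases hj : j ∈ s
  · simpa only [piecewise_eq_of_mem _ _ _ hj] using contDiff_apply 𝕜 E j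
  · simpa only [piecewise_eq_of_notMem _ _ _ hj] using contDiff_const

theorem ContMDiff.comp_piecewise_zero [DecidableEq ι]
    {E' : Type*} [NormedAddCommGroup E'] [NormedSpace 𝕜 E']
    {H' : Type*} [TopologicalSpace H'] {I' : ModelWithCorners 𝕜 E' H'}
    {N : Type*} [TopologicalSpace N] [ChartedSpace H' N]
    {F : (ι → E) → N} {i : ι}
    (hF : ContMDiff 𝓘(𝕜, ι → E) I' n fun x => F (update x i 0))
    {s : Finset ι} (hi : i ∉ s) :
    ContMDiff 𝓘(𝕜, ι → E) I' n fun x => F (s.piecewise x 0) := by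
  have hfix (x : ι → E) : update (s.piecewise x 0) i 0 = s.piecewise x 0 :=
    update_eq_self_iff.2 (piecewise_eq_of_notMem s x 0 hi).symm
  simpa only [comp_def, hfix] using hF.comp (contMDiff_piecewise_zero s)

end CoordinateProjection

section InclusionExclusion

variable {ι : Type*} [Fintype ι] [DecidableEq ι] {G : Type*} [AddCommGroup G]

theorem sum_neg_one_pow_card_sub_smul_eq_zero (φ : Finset ι → G) (i : ι)
    (hφ : ∀ s, i ∉ s → φ (insert i s) = φ s) :
    ∑ s : Finset ι, (-1 : ℤ) ^ (Fintype.card ι - s.card) • φ s = 0 := by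
  rw [← powerset_univ, ← insert_erase (mem_univ i), sum_powerset_insert (notMem_erase i univ),
    ← sum_add_distrib]
  refine sum_eq_zero fun t ht => ?_
  have hit : i ∉ t := fun h => notMem_erase i univ (mem_powerset.1 ht h)
  have hlt : t.card < Fintype.card ι := card_lt_univ_of_notMem hit
  rw [hφ t hit, card_insert_of_notMem hit,
    show Fintype.card ι - t.card = Fintype.card ι - (t.card + 1) + 1 by omega,
    pow_succ, mul_neg_one, neg_smul, neg_add_cancel]

theorem sum_card_lt_neg_one_pow_smul_piecewise_eq {M : Type*} [Zero M] (F : (ι → M) → G)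
    {x : ι → M} {i : ι} (hx : x i = 0) :
    ∑ s ∈ univ.filter (fun s : Finset ι => s.card < Fintype.card ι),
      (-1 : ℤ) ^ (Fintype.card ι - s.card + 1) • F (s.piecewise x 0) = F x := by
  have hfilter : univ.filter (fun s : Finset ι => s.card < Fintype.card ι) = univ.erase univ := by
    ext s
    simp [card_lt_iff_ne_univ]
  have hsum := sum_neg_one_pow_card_sub_smul_eq_zero (fun s => F (s.piecewise x 0)) i
    fun s hi => by
      rw [piecewise_insert, hx, update_eq_self_iff.2 (piecewise_eq_of_notMem s x 0 hi).symm]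
  simp only [hfilter, pow_succ, mul_neg_one, neg_smul, sum_neg_distrib,
    sum_erase_eq_sub (mem_univ _), hsum, card_univ, Nat.sub_self, pow_zero, one_smul,
    piecewise_univ, neg_zero, zero_sub, neg_neg]

end InclusionExclusion

theorem stmt_16_general (n : ℕ)
    {E : Type*} [NormedAddCommGroup E] [NormedSpace ℝ E]
    {H : Type*} [TopologicalSpace H] (I : ModelWithCorners ℝ E H)
    {G : Type*} [AddCommGroup G] [TopologicalSpace G] [ChartedSpace H G]
    [LieAddGroup I (⊤ : ℕ∞) G]
    (F : (Fin n → ℝ) → G)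
    (hF : ∀ i : Fin n,
      ContMDiff 𝓘(ℝ, Fin n → ℝ) I (⊤ : ℕ∞) (fun x => F (Function.update x i 0))) :
    ContMDiff 𝓘(ℝ, Fin n → ℝ) I (⊤ : ℕ∞)
      (fun x : Fin n → ℝ =>
        ∑ s ∈ Finset.univ.filter (fun s : Finset (Fin n) => s.card < n),
          ((-1 : ℤ) ^ (n - s.card + 1)) •
            F (fun j => if j ∈ s then x j else 0)) ∧
    ∀ x : Fin n → ℝ, (∃ i, x i = 0) →
      (∑ s ∈ Finset.univ.filter (fun s : Finset (Fin n) => s.card < n),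
          ((-1 : ℤ) ^ (n - s.card + 1)) •
            F (fun j => if j ∈ s then x j else 0)) = F x := by
  constructor
  · refine contMDiff_finsetSum fun s hs => ?_
    obtain ⟨i, hi⟩ : ∃ i, i ∉ s := by
      have hs_ne : s ≠ univ := by rintro rfl; simp at hs
      simpa [eq_univ_iff_forall] using hs_ne
    exact ((hF i).comp_piecewise_zero hi).zsmul _
  · rintro x ⟨i, hx⟩
    have h := sum_card_lt_neg_one_pow_smul_piecewise_eq F hx
    rwa [Fintype.card_fin] at h

theorem stmt_16 (n : ℕ) (hn : 1 ≤ n)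
    {E : Type*} [NormedAddCommGroup E] [NormedSpace ℝ E]
    {H : Type*} [TopologicalSpace H] (I : ModelWithCorners ℝ E H)
    {G : Type*} [AddCommGroup G] [TopologicalSpace G] [ChartedSpace H G]
    [LieAddGroup I (⊤ : ℕ∞) G]
    (F : (Fin n → ℝ) → G)
    (hF : ∀ i : Fin n,
      ContMDiff 𝓘(ℝ, Fin n → ℝ) I (⊤ : ℕ∞) (fun x => F (Function.update x i 0))) :
    ContMDiff 𝓘(ℝ, Fin n → ℝ) I (⊤ : ℕ∞)
      (fun x : Fin n → ℝ =>
        ∑ s ∈ Finset.univ.filter (fun s : Finset (Fin n) => s.card < n),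
          ((-1 : ℤ) ^ (n - s.card + 1)) •
            F (fun j => if j ∈ s then x j else 0)) ∧
    ∀ x : Fin n → ℝ, (∃ i, x i = 0) →
      (∑ s ∈ Finset.univ.filter (fun s : Finset (Fin n) => s.card < n),
          ((-1 : ℤ) ^ (n - s.card + 1)) •
            F (fun j => if j ∈ s then x j else 0)) = F x :=
  stmt_16_general n I F hF
end
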